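/- Let (P, L, I) be a finite partial linear space with no triangles, and let G be a collineation group of (P, L, I) that acts transitively on L and has a normal subgroup M acting regularly on P with M ⋊ Inn(M) ≤ G. Suppose the action of M on L is not semiregular, i.e., some line has nontrivial setwise stabiliser in M. Then G acts transitively on the flags of (P, L, I), that is, on the set of incident point–line pairs. -/

import Mathlib

/-!
Let `l` be a line through the identity point `1` and `m ≠ 1` an element of `M` stabilising `l`
(it exists because `M` is normal in the line-transitive group `G`). For a point `x ≠ 1` of `l`,
conjugation `z ↦ x⁻¹ z x` lies in `G` and fixes the points `1` and `x`, hence the line `l`. As `l`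
contains `1 * m` and `x * m`, it also contains their conjugate `m * x`. Now `l` and its translate
`l * x` both pass through the distinct points `x` and `m * x`, so they coincide: every point of `l`
stabilises `l`. Translating the point of a flag along its own line back to `1` shows that the
stabiliser of `1` is transitive on the lines through `1`, and left translations carry every flag
to a flag through `1`.
-/

section Collineation

variable {M L G : Type*} [Group G] [MulAction G L] {I : M → L → Prop}

lemma smul_eq_self_of_fixes_two_points [MulAction G M]
    (hpls : ∀ p q : M, p ≠ q → ∀ l l' : L, I p l → I q l → I p l' → I q l' → l = l')
    (hcol : ∀ (g : G) (p : M) (l : L), I p l ↔ I (g • p) (g • l))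
    {g : G} {p q : M} {l : L} (hpq : p ≠ q) (hp : I p l) (hq : I q l)
    (hgp : g • p = p) (hgq : g • q = q) : g • l = l := by
  refine hpls p q hpq _ _ ?_ ?_ hp hq
  · simpa [hgp] using (hcol g p l).1 hp
  · simpa [hgq] using (hcol g q l).1 hq

lemma exists_ne_one_smul_eq_of_normal [Group M] (ρ : M →* G) (hρ : Function.Injective ρ)
    (hnorm : ρ.range.Normal) (htL : ∀ l l' : L, ∃ g : G, g • l = l')
    (hnotsemi : ∃ (l₀ : L) (m : M), m ≠ 1 ∧ ρ m • l₀ = l₀) (l : L) :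
    ∃ m : M, m ≠ 1 ∧ ρ m • l = l := by
  obtain ⟨l₀, m₀, hm₀, hm₀l₀⟩ := hnotsemi
  obtain ⟨g, rfl⟩ := htL l₀ l
  obtain ⟨m, hm⟩ := hnorm.conj_mem (ρ m₀) ⟨m₀, rfl⟩ g
  refine ⟨m, fun h => hm₀ (hρ ?_), ?_⟩
  · rwa [h, map_one, eq_comm, conj_eq_one_iff, ← map_one ρ] at hm
  · rw [hm, mul_smul, mul_smul, inv_smul_smul, hm₀l₀]

variable [Group M] [MulAction G M]

lemma injective_of_smul_eq_mul (ρ : M →* G) (hρ : ∀ m x : M, ρ m • x = x * m) :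
    Function.Injective ρ := fun m n h => by
  simpa using (hρ m 1).symm.trans ((congrArg (· • (1 : M)) h).trans (hρ n 1))

lemma exists_smul_eq_inv_mul_mul (ρ : M →* G) (hρ : ∀ m x : M, ρ m • x = x * m)
    (hleft : ∀ m : M, ∃ g : G, ∀ x : M, g • x = m⁻¹ * x) (x : M) :
    ∃ κ : G, ∀ z : M, κ • z = x⁻¹ * z * x := by
  obtain ⟨g, hg⟩ := hleft x
  exact ⟨ρ x * g, fun z => by rw [mul_smul, hg, hρ]⟩

lemma incident_mul_of_smul_eq (ρ : M →* G) (hρ : ∀ m x : M, ρ m • x = x * m)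
    (hcol : ∀ (g : G) (p : M) (l : L), I p l ↔ I (g • p) (g • l))
    {z k : M} {l : L} (hz : I z l) (hk : ρ k • l = l) : I (z * k) l := by
  simpa [hρ, hk] using (hcol (ρ k) z l).1 hz

lemma smul_eq_self_of_incident
    (hpls : ∀ p q : M, p ≠ q → ∀ l l' : L, I p l → I q l → I p l' → I q l' → l = l')
    (hcol : ∀ (g : G) (p : M) (l : L), I p l ↔ I (g • p) (g • l))
    (ρ : M →* G) (hρ : ∀ m x : M, ρ m • x = x * m)
    (hleft : ∀ m : M, ∃ g : G, ∀ x : M, g • x = m⁻¹ * x)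
    {l : L} (h1 : I 1 l) {m : M} (hm : m ≠ 1) (hml : ρ m • l = l)
    {x : M} (hx : I x l) : ρ x • l = l := by
  rcases eq_or_ne x 1 with rfl | hx1
  · rw [map_one, one_smul]
  obtain ⟨κ, hκ⟩ := exists_smul_eq_inv_mul_mul ρ hρ hleft x
  have hκl : κ • l = l := smul_eq_self_of_fixes_two_points hpls hcol hx1.symm h1 hx
    (by rw [hκ, mul_one, inv_mul_cancel]) (by rw [hκ, inv_mul_cancel, one_mul])
  have hxm : I (x * m) l := incident_mul_of_smul_eq ρ hρ hcol hx hml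
  have hmx : I (m * x) l := by
    simpa [hκ, hκl, mul_assoc] using (hcol κ (x * m) l).1 hxm
  have hm1 : I m l := by simpa using incident_mul_of_smul_eq ρ hρ hcol h1 hml
  have hx_shift : I x (ρ x • l) := by simpa [hρ] using (hcol (ρ x) 1 l).1 h1
  have hmx_shift : I (m * x) (ρ x • l) := by simpa [hρ] using (hcol (ρ x) m l).1 hm1
  have hne : x ≠ m * x := fun h => hm (by simpa using h.symm)
  exact (hpls x (m * x) hne l _ hx hmx hx_shift hmx_shift).symm

lemma exists_smul_one_eq_one_and_smul_eq
    (hpls : ∀ p q : M, p ≠ q → ∀ l l' : L, I p l → I q l → I p l' → I q l' → l = l')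
    (hcol : ∀ (g : G) (p : M) (l : L), I p l ↔ I (g • p) (g • l))
    (htL : ∀ l l' : L, ∃ g : G, g • l = l')
    (ρ : M →* G) (hρ : ∀ m x : M, ρ m • x = x * m) (hnorm : ρ.range.Normal)
    (hleft : ∀ m : M, ∃ g : G, ∀ x : M, g • x = m⁻¹ * x)
    (hnotsemi : ∃ (l₀ : L) (m : M), m ≠ 1 ∧ ρ m • l₀ = l₀)
    {l l' : L} (hl : I 1 l) (hl' : I 1 l') : ∃ g : G, g • (1 : M) = 1 ∧ g • l = l' := by
  obtain ⟨g, rfl⟩ := htL l l'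
  obtain ⟨m, hm, hml⟩ := exists_ne_one_smul_eq_of_normal ρ (injective_of_smul_eq_mul ρ hρ)
    hnorm htL hnotsemi (g • l)
  have hq : I (g • (1 : M)) (g • l) := (hcol g 1 l).1 hl
  have hfix := smul_eq_self_of_incident hpls hcol ρ hρ hleft hl' hm hml hq
  refine ⟨(ρ (g • (1 : M)))⁻¹ * g, ?_, ?_⟩
  · rw [mul_smul, inv_smul_eq_iff, hρ, one_mul]
  · rw [mul_smul, inv_smul_eq_iff, hfix]

lemma exists_smul_eq_one_of_incident
    (hcol : ∀ (g : G) (p : M) (l : L), I p l ↔ I (g • p) (g • l))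
    (hleft : ∀ m : M, ∃ g : G, ∀ x : M, g • x = m⁻¹ * x)
    {p : M} {l : L} (hpl : I p l) : ∃ g : G, g • p = 1 ∧ I 1 (g • l) := by
  obtain ⟨g, hg⟩ := hleft p
  have hgp : g • p = 1 := by rw [hg, inv_mul_cancel]
  exact ⟨g, hgp, hgp ▸ (hcol g p l).1 hpl⟩

end Collineation

theorem stmt_4_general {M L G : Type*} [Group M]
    [Group G] [MulAction G M] [MulAction G L]
    (I : M → L → Prop)
    -- any two distinct points are incident with at most one common line
    (hpls : ∀ p q : M, p ≠ q → ∀ l l' : L, I p l → I q l → I p l' → I q l' → l = l')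
    -- G acts by collineations
    (hcol : ∀ (g : G) (p : M) (l : L), I p l ↔ I (g • p) (g • l))
    -- G is transitive on lines
    (htL : ∀ l l' : L, ∃ g : G, g • l = l')
    -- M is (the image of) a normal subgroup of G acting on points by right multiplication
    (ρ : M →* G) (hρ : ∀ m x : M, (ρ m) • x = x * m)
    (hnorm : ρ.range.Normal)
    -- every left translation of M is induced by an element of G
    (hleft : ∀ m : M, ∃ g : G, ∀ x : M, g • x = m⁻¹ * x)
    -- the action of M on lines is not semiregular
    (hnotsemi : ∃ (l₀ : L) (m : M), m ≠ 1 ∧ (ρ m) • l₀ = l₀) :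
    ∀ (p : M) (l : L), I p l → ∀ (p' : M) (l' : L), I p' l' →
      ∃ g : G, g • p = p' ∧ g • l = l' := by
  intro p l hpl p' l' hp'l'
  obtain ⟨a, hap, hal⟩ := exists_smul_eq_one_of_incident hcol hleft hpl
  obtain ⟨b, hbp', hbl'⟩ := exists_smul_eq_one_of_incident hcol hleft hp'l'
  obtain ⟨c, hc1, hcl⟩ :=
    exists_smul_one_eq_one_and_smul_eq hpls hcol htL ρ hρ hnorm hleft hnotsemi hal hbl'
  refine ⟨b⁻¹ * c * a, ?_, ?_⟩
  · rw [mul_smul, mul_smul, hap, hc1, inv_smul_eq_iff, hbp']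
  · rw [mul_smul, mul_smul, hcl, inv_smul_smul]

/-- In a finite triangle-free partial linear space with a line-transitive
collineation group `G` having a normal point-regular subgroup `M` with `M ⋊ Inn(M) ≤ G`,
if `M` is not semiregular on lines then `G` is transitive on flags. -/
theorem stmt_4 {M L G : Type*} [Group M] [Fintype M] [Fintype L]
    [Group G] [MulAction G M] [MulAction G L]
    (I : M → L → Prop)
    -- any two distinct points are incident with at most one common line
    (hpls : ∀ p q : M, p ≠ q → ∀ l l' : L, I p l → I q l → I p l' → I q l' → l = l')
    -- no triangles
    (htri : ∀ p q r : M, ∀ l₁ l₂ l₃ : L, p ≠ q → q ≠ r → p ≠ r →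
      l₁ ≠ l₂ → l₂ ≠ l₃ → l₁ ≠ l₃ →
      I p l₁ → I q l₁ → I q l₂ → I r l₂ → I p l₃ → I r l₃ → False)
    -- G acts by collineations
    (hcol : ∀ (g : G) (p : M) (l : L), I p l ↔ I (g • p) (g • l))
    -- G is transitive on lines
    (htL : ∀ l l' : L, ∃ g : G, g • l = l')
    -- M is (the image of) a normal subgroup of G acting on points by right multiplication
    (ρ : M →* G) (hρ : ∀ m x : M, (ρ m) • x = x * m)
    (hnorm : ρ.range.Normal)
    -- every left translation of M is induced by an element of G
    (hleft : ∀ m : M, ∃ g : G, ∀ x : M, g • x = m⁻¹ * x)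
    -- the action of M on lines is not semiregular
    (hnotsemi : ∃ (l₀ : L) (m : M), m ≠ 1 ∧ (ρ m) • l₀ = l₀) :
    ∀ (p : M) (l : L), I p l → ∀ (p' : M) (l' : L), I p' l' →
      ∃ g : G, g • p = p' ∧ g • l = l' :=
  stmt_4_general I hpls hcol htL ρ hρ hnorm hleft hnotsemi
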